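/- Let n ≥ 1, let G be a simple graph on Fin n with Laplacian matrix L (over ℝ) and degree vector d (d_i = degree of vertex i). If D is a real n×n matrix with zero diagonal such that L·D + 2·I = (2·1 − d)·1ᵀ, then G is a tree and D is the distance matrix of G, i.e., D i j = dist_G(i, j) for all vertices i, j. -/

import Mathlib

/-!
Summing the identity `L·D + 2·I = (2·1 − d)·1ᵀ` against a vector `x` with `xᵀL = 0` gives
`2·x = (x·(2 − d))·1`, so every such `x` is constant. Taking for `x` the indicator of a connected
component shows that `G` is connected; taking `x = 1` gives `∑ dᵢ = 2n − 2`, i.e. `n − 1` edges.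
Hence `G` is a tree. In a tree, every vertex `i ≠ j` has exactly one neighbour closer to `j`, and
all others are farther by one; this makes the distance matrix satisfy the same identity. The
difference of two solutions has its columns in `ker L`, i.e. constant, and both vanish on the
diagonal.
-/

open Matrix Finset

theorem Matrix.mul_eq_dotProduct_of_vecMul_eq_zero {m R : Type*} [Fintype m] [DecidableEq m]
    [CommRing R] {M D : Matrix m m R} {b x : m → R} {c : R}
    (h : M * D + c • 1 = vecMulVec b (fun _ => 1)) (hx : x ᵥ* M = 0) (j : m) :
    c * x j = x ⬝ᵥ b := by
  have := congrFun (congrArg (x ᵥ* ·) h) j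
  simpa [vecMul_add, ← vecMul_vecMul, hx, vecMul_smul, vecMul_vecMulVec] using this

namespace SimpleGraph

variable {V : Type*} {G : SimpleGraph V}

theorem IsTree.existsUnique_adj_dist_add_one (hG : G.IsTree) {i j : V} (hij : i ≠ j) :
    ∃! k, G.Adj i k ∧ G.dist k j + 1 = G.dist i j := by
  have geodesic_cons : ∀ k (hik : G.Adj i k), G.dist k j + 1 = G.dist i j →
      ∃ r : G.Walk k j, (Walk.cons hik r).IsPath := fun k hik hk => by
    obtain ⟨r, hr⟩ := (hG.connected k j).exists_walk_length_eq_dist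
    exact ⟨r, Walk.isPath_of_length_eq_dist _ (by rw [Walk.length_cons, hr, hk])⟩
  refine existsUnique_of_exists_of_unique ?_ fun k k' ⟨hik, hk⟩ ⟨hik', hk'⟩ => ?_
  · obtain ⟨p, hp⟩ := (hG.connected i j).exists_walk_length_eq_dist
    cases p with
    | nil => exact absurd rfl hij
    | @cons _ k _ hadj q =>
      refine ⟨k, hadj, le_antisymm ?_ ?_⟩
      · simpa [← hp] using dist_le q
      · simpa [dist_eq_one_iff_adj.mpr hadj, add_comm] using
          hG.connected.dist_triangle (u := i) (v := k) (w := j)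
  · obtain ⟨r, hr⟩ := geodesic_cons k hik hk
    obtain ⟨r', hr'⟩ := geodesic_cons k' hik' hk'
    simpa using congrArg Walk.snd ((hG.existsUnique_path i j).unique hr hr')

theorem IsTree.dist_eq_sub_ite_of_adj [DecidableEq V] (hG : G.IsTree) {i j k₀ k : V}
    (hk₀ : G.dist k₀ j + 1 = G.dist i j)
    (hunique : ∀ k, G.Adj i k ∧ G.dist k j + 1 = G.dist i j → k = k₀) (hik : G.Adj i k) :
    (G.dist k j : ℝ) = G.dist i j + 1 - 2 * if k = k₀ then 1 else 0 := by
  split_ifs with h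
  · rw [h, ← hk₀]; push_cast; ring
  · rcases hG.dist_eq_dist_add_one_of_adj j hik with hd | hd
    · exact absurd (hunique k ⟨hik, by rw [dist_comm, ← hd, dist_comm]⟩) h
    · rw [dist_comm, hd, dist_comm]; push_cast; ring

section Laplacian

variable [Fintype V] [DecidableEq V] [DecidableRel G.Adj]

theorem vecMul_lapMatrix_eq_zero_iff_forall_reachable {x : V → ℝ} :
    x ᵥ* G.lapMatrix ℝ = 0 ↔ ∀ i j, G.Reachable i j → x i = x j := by
  rw [← (G.isSymm_lapMatrix (R := ℝ)).eq, vecMul_transpose,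
    lapMatrix_mulVec_eq_zero_iff_forall_reachable]

theorem connected_of_lapMatrix_mul_add_smul_one [Nonempty V] {D : Matrix V V ℝ} {b : V → ℝ}
    {c : ℝ} (hc : c ≠ 0) (h : G.lapMatrix ℝ * D + c • 1 = vecMulVec b (fun _ => 1)) :
    G.Connected := by
  refine ⟨fun u v => ?_⟩
  let x : V → ℝ := fun k => if G.Reachable u k then 1 else 0
  have hx : x ᵥ* G.lapMatrix ℝ = 0 :=
    vecMul_lapMatrix_eq_zero_iff_forall_reachable.mpr fun i j hij => by
      simp only [x, show G.Reachable u i ↔ G.Reachable u j from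
        ⟨fun hi => hi.trans hij, fun hj => hj.trans hij.symm⟩]
  have huv : c * x v = c * x u := by
    rw [mul_eq_dotProduct_of_vecMul_eq_zero h hx, mul_eq_dotProduct_of_vecMul_eq_zero h hx]
  by_contra hnr
  have hxuv : x v = x u := mul_left_cancel₀ hc huv
  simp [x, hnr] at hxuv

theorem card_edgeFinset_add_one_of_lapMatrix_mul_add_two_smul_one [Nonempty V]
    {D : Matrix V V ℝ}
    (h : G.lapMatrix ℝ * D + (2 : ℝ) • 1 = vecMulVec (fun i => 2 - (G.degree i : ℝ)) (fun _ => 1)) :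
    #G.edgeFinset + 1 = Fintype.card V := by
  have h1 : (fun _ => 1 : V → ℝ) ᵥ* G.lapMatrix ℝ = 0 :=
    vecMul_lapMatrix_eq_zero_iff_forall_reachable.mpr fun _ _ _ => rfl
  have hsum := mul_eq_dotProduct_of_vecMul_eq_zero h h1 (Classical.arbitrary V)
  have hdeg : ((∑ v, G.degree v : ℕ) : ℝ) = 2 * #G.edgeFinset := by
    rw [sum_degrees_eq_twice_card_edges]; push_cast; ring
  simp only [dotProduct, one_mul, mul_one, sum_sub_distrib, sum_const, card_univ,
    nsmul_eq_mul] at hsum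
  push_cast at hdeg
  exact_mod_cast (by linarith : (#G.edgeFinset : ℝ) + 1 = Fintype.card V)

theorem eq_of_lapMatrix_mul_eq (hG : G.Connected) {A B : Matrix V V ℝ}
    (h : G.lapMatrix ℝ * A = G.lapMatrix ℝ * B) (hdiag : ∀ j, A j j = B j j) : A = B := by
  ext i j
  have hker : G.lapMatrix ℝ *ᵥ (fun k => A k j - B k j) = 0 := by
    funext k
    simpa [mulVec, dotProduct, mul_sub, mul_apply, sub_eq_zero] using congrFun (congrFun h k) j
  have := (lapMatrix_mulVec_eq_zero_iff_forall_reachable G).mp hker i j (hG i j)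
  linarith [hdiag j]

theorem IsTree.lapMatrix_mul_dist_add_two_smul_one (hG : G.IsTree) :
    G.lapMatrix ℝ * Matrix.of (fun i j => (G.dist i j : ℝ)) + (2 : ℝ) • 1 =
      vecMulVec (fun i => 2 - (G.degree i : ℝ)) (fun _ => 1) := by
  ext i j
  have hentry : (G.lapMatrix ℝ * Matrix.of (fun i j => (G.dist i j : ℝ))) i j =
      G.degree i * G.dist i j - ∑ k ∈ G.neighborFinset i, (G.dist k j : ℝ) :=
    lapMatrix_mulVec_apply G i (fun k => (G.dist k j : ℝ))
  simp only [Matrix.add_apply, hentry, Matrix.smul_apply, one_apply, vecMulVec_apply, smul_eq_mul,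
    mul_one]
  obtain rfl | hij := eq_or_ne i j
  · have hnbr : ∀ k ∈ G.neighborFinset i, (G.dist k i : ℝ) = 1 := fun k hk => by
      rw [dist_eq_one_iff_adj.mpr ((mem_neighborFinset G i k).mp hk).symm, Nat.cast_one]
    rw [sum_congr rfl hnbr, sum_const, card_neighborFinset_eq_degree, dist_self, if_pos rfl]
    push_cast
    ring
  · obtain ⟨k₀, ⟨hik₀, hk₀⟩, hunique⟩ := hG.existsUnique_adj_dist_add_one hij
    have hk₀i : k₀ ∈ G.neighborFinset i := (mem_neighborFinset G i k₀).mpr hik₀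
    rw [sum_congr rfl fun k hk =>
        hG.dist_eq_sub_ite_of_adj hk₀ hunique ((mem_neighborFinset G i k).mp hk),
      sum_sub_distrib, ← mul_sum, sum_ite_eq', if_pos hk₀i, sum_const,
      card_neighborFinset_eq_degree, if_neg hij]
    simp only [nsmul_eq_mul]
    ring

end Laplacian

end SimpleGraph

/-- Unweighted case: if the Laplacian of a simple graph `G` satisfies
`L·D + 2·I = (2·1 − d)·1ᵀ` for a zero-diagonal matrix `D`, then `G` is a tree
and `D` is its distance matrix. -/
theorem bilinear_identity_tree_and_distance {n : ℕ} (hn : 1 ≤ n)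
    (G : SimpleGraph (Fin n)) [DecidableRel G.Adj]
    (L : Matrix (Fin n) (Fin n) ℝ) (hL : L = G.lapMatrix ℝ)
    (d : Fin n → ℝ) (hd : ∀ i, d i = (G.degree i : ℝ))
    (D : Matrix (Fin n) (Fin n) ℝ) (hDdiag : ∀ i, D i i = 0)
    (h : L * D + (2 : ℝ) • (1 : Matrix (Fin n) (Fin n) ℝ) =
      Matrix.vecMulVec (fun i => 2 - d i) (fun _ => (1 : ℝ))) :
    G.IsTree ∧ ∀ i j, D i j = (G.dist i j : ℝ) := by
  have : Nonempty (Fin n) := ⟨⟨0, hn⟩⟩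
  have hd' : (fun i => 2 - d i) = fun i => 2 - (G.degree i : ℝ) := funext fun i => by rw [hd]
  rw [hL, hd'] at h
  have hconn : G.Connected := G.connected_of_lapMatrix_mul_add_smul_one two_ne_zero h
  have hT : G.IsTree := SimpleGraph.isTree_iff_connected_and_card.mpr
    ⟨hconn, by simpa [Nat.card_eq_fintype_card, SimpleGraph.edgeFinset_card] using
      G.card_edgeFinset_add_one_of_lapMatrix_mul_add_two_smul_one h⟩
  have hD : D = Matrix.of fun i j => (G.dist i j : ℝ) :=
    G.eq_of_lapMatrix_mul_eq hconn
      (add_right_cancel (h.trans hT.lapMatrix_mul_dist_add_two_smul_one.symm))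
      (by simp [hDdiag])
  exact ⟨hT, fun i j => by rw [hD, of_apply]⟩
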